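/- Fix β>0 and θ∈ℝ. For all t,r>0, u≥0 and every x≥0, one has e^{−x c^θ_t} · e^{c̃^θ_{u+t+r}·0} + ∫_0^∞ e^{c̃^θ_{u+t+r} y} q^θ_t(x,y) dy = e^{c̃^θ_{u+r} x}; that is, the space–time function (t,z) ↦ e^{c̃^θ_{t+r} z} is harmonic for the CSBP kernels (here the extinction atom at 0 contributes e^{−x c^θ_t}). -/

import Mathlib

/-!
Expanding the series in `qt` and integrating term by term against `e^{λy}` gives, for
`λ < c̃_t`, the Laplace transform
`∫₀^∞ e^{λy} q_t(x,y) dy = e^{-x c_t} (e^{x c_t c̃_t / (c̃_t - λ)} - 1)`;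
here `c̃_t = c_t + 2θ` absorbs the factor `e^{-2θy}`. Take `λ = c̃_{s+t}` with `s = u + r`.
The flow property `1/c_{s+t} = 1/c_t + e^{2βθt}/c_s` yields
`c_t c̃_{s+t} = c̃_s (c̃_t - c̃_{s+t})`, which turns the exponent
`x c_t c̃_t / (c̃_t - c̃_{s+t}) - x c_t` into `c̃_s x`; the atom `e^{-x c_t}` supplies the missing `1`.
-/

open MeasureTheory Filter

/-- `c^θ_t` from the paper, with time-scale parameter `β`. -/
noncomputable def cc (β θ t : ℝ) : ℝ :=
  if θ = 0 then 1 / (β * t) else 2 * θ / (Real.exp (2 * β * θ * t) - 1)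

/-- `c̃^θ_t` from the paper. -/
noncomputable def cct (β θ t : ℝ) : ℝ :=
  if θ = 0 then 1 / (β * t) else 2 * θ / (1 - Real.exp (-(2 * β * θ * t)))

/-- `u^θ(λ, t)` from the paper. -/
noncomputable def uu (β θ l t : ℝ) : ℝ :=
  if t = 0 then l else l * cc β θ t / (cct β θ t + l)

/-- entrance density `q^θ_t(x)`. -/
noncomputable def qe (β θ t x : ℝ) : ℝ :=
  cc β θ t * cct β θ t * Real.exp (-(cct β θ t * x))

/-- transition density `q^θ_t(x, y)`. -/
noncomputable def qt (β θ t x y : ℝ) : ℝ :=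
  x * cc β θ t * cct β θ t * Real.exp (-((x + y) * cc β θ t) - 2 * θ * y) *
    ∑' k : ℕ, (x * y * cc β θ t * cct β θ t) ^ k /
      ((Nat.factorial k : ℝ) * (Nat.factorial (k + 1) : ℝ))

/-- the space-time harmonic function `m^{α,θ}(t, z)`. -/
noncomputable def mm (β θ α t z : ℝ) : ℝ :=
  z * Real.exp (-(α / cc β θ t)) *
    ∑' i : ℕ, (α * z) ^ i * Real.exp (((i : ℝ) + 1) * (2 * β * θ * t)) /
      ((Nat.factorial i : ℝ) * (Nat.factorial (i + 1) : ℝ))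

/-- the space-time harmonic function `m̃^{α,θ}(t, z)`. -/
noncomputable def mmt (β θ α t z : ℝ) : ℝ :=
  z * Real.exp (2 * θ * z) * Real.exp (-(α / cct β θ t)) *
    ∑' i : ℕ, (α * z) ^ i * Real.exp (-(((i : ℝ) + 1) * (2 * β * θ * t))) /
      ((Nat.factorial i : ℝ) * (Nat.factorial (i + 1) : ℝ))

section CSBP

open Real Set
open scoped Nat

theorem two_mul_mul_inv_cc (β θ τ : ℝ) :
    2 * θ * (cc β θ τ)⁻¹ = exp (2 * β * θ * τ) - 1 := by
  unfold cc
  split_ifs with hθ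
  · simp [hθ]
  · rw [inv_div]; field_simp

theorem inv_cc_add (β θ s t : ℝ) :
    (cc β θ (s + t))⁻¹ = (cc β θ t)⁻¹ + exp (2 * β * θ * t) * (cc β θ s)⁻¹ := by
  unfold cc
  split_ifs with hθ
  · simp [hθ]; ring
  · simp only [inv_div]
    rw [show 2 * β * θ * (s + t) = 2 * β * θ * s + 2 * β * θ * t by ring, exp_add]
    field_simp
    ring

theorem cct_eq_exp_mul_cc (β θ τ : ℝ) : cct β θ τ = exp (2 * β * θ * τ) * cc β θ τ := by
  unfold cc cct
  split_ifs with hθ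
  · simp [hθ]
  · rw [exp_neg, show 1 - (exp (2 * β * θ * τ))⁻¹ = (exp (2 * β * θ * τ) - 1) / exp (2 * β * θ * τ)
      by field_simp, div_div_eq_mul_div]
    ring

variable {β θ : ℝ}

theorem cc_pos (hβ : 0 < β) {t : ℝ} (ht : 0 < t) : 0 < cc β θ t := by
  unfold cc
  split_ifs with hθ
  · positivity
  rcases lt_or_gt_of_ne hθ with hθ | hθ
  · exact div_pos_of_neg_of_neg (by linarith)
      (sub_neg.2 (Real.exp_lt_one_iff.2 (mul_neg_of_neg_of_pos (by nlinarith) ht)))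
  · exact div_pos (by linarith) (sub_pos.2 (Real.one_lt_exp_iff.2 (by positivity)))

theorem cct_pos (hβ : 0 < β) {t : ℝ} (ht : 0 < t) : 0 < cct β θ t := by
  rw [cct_eq_exp_mul_cc]; exact mul_pos (exp_pos _) (cc_pos hβ ht)

theorem cct_eq_cc_add (hβ : 0 < β) {t : ℝ} (ht : 0 < t) :
    cct β θ t = cc β θ t + 2 * θ := by
  have hc := (cc_pos (θ := θ) hβ ht).ne'
  have h := two_mul_mul_inv_cc β θ t
  have hinv : cc β θ t * (cc β θ t)⁻¹ = 1 := mul_inv_cancel₀ hc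
  rw [cct_eq_exp_mul_cc]
  linear_combination (-cc β θ t) * h + 2 * θ * hinv

theorem cc_mul_cct_add (hβ : 0 < β) {s t : ℝ} (hs : 0 < s) (ht : 0 < t) :
    cc β θ t * cct β θ (s + t) = cct β θ s * (cct β θ t - cct β θ (s + t)) := by
  have hs' := (cc_pos (θ := θ) hβ hs).ne'
  have ht' := (cc_pos (θ := θ) hβ ht).ne'
  have hst' := (cc_pos (θ := θ) hβ (add_pos hs ht)).ne'
  have hadd := inv_cc_add β θ s t
  have hrel_s := two_mul_mul_inv_cc β θ s
  have hrel_t := two_mul_mul_inv_cc β θ t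
  simp only [cct_eq_exp_mul_cc]
  rw [show 2 * β * θ * (s + t) = 2 * β * θ * s + 2 * β * θ * t by ring, exp_add]
  field_simp at hadd hrel_s hrel_t ⊢
  linear_combination -hadd + cc β θ (s + t) * hrel_t - cc β θ (s + t) * hrel_s

theorem hasSum_pow_succ_div_factorial_succ (z : ℝ) :
    HasSum (fun k : ℕ ↦ z ^ (k + 1) / (k + 1)!) (exp z - 1) := by
  have h := (hasSum_nat_add_iff' 1).mpr (NormedSpace.expSeries_div_hasSum_exp z)
  simpa [← Real.exp_eq_exp_ℝ] using h

theorem integral_pow_mul_exp_neg_mul_Ioi {c : ℝ} (hc : 0 < c) (k : ℕ) :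
    ∫ y in Ioi 0, y ^ k * exp (-(c * y)) = k ! / c ^ (k + 1) := by
  have h := integral_rpow_mul_exp_neg_mul_Ioi (a := k + 1) (by positivity) hc
  simp only [add_sub_cancel_right, rpow_natCast, Gamma_nat_eq_factorial] at h
  rw [h, ← Nat.cast_succ, rpow_natCast, one_div, inv_pow]
  field_simp

theorem integrableOn_pow_mul_exp_neg_mul_Ioi {c : ℝ} (hc : 0 < c) (k : ℕ) :
    IntegrableOn (fun y ↦ y ^ k * exp (-(c * y))) (Ioi 0) :=
  .of_integral_ne_zero (by rw [integral_pow_mul_exp_neg_mul_Ioi hc]; positivity)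

/-- `besselI1Series z = I₁(2√z) / √z`, the series in the transition density `qt`. -/
noncomputable def besselI1Series (z : ℝ) : ℝ :=
  ∑' k : ℕ, z ^ k / (k ! * (k + 1)!)

theorem integral_exp_neg_mul_mul_pow_div {a : ℝ} (ha : 0 < a) (B : ℝ) (k : ℕ) :
    ∫ y in Ioi 0, exp (-(a * y)) * ((B * y) ^ k / (k ! * (k + 1)!)) =
      (B / a) ^ k / (k + 1)! / a := by
  have h (y : ℝ) : exp (-(a * y)) * ((B * y) ^ k / (k ! * (k + 1)!)) =
      B ^ k / (k ! * (k + 1)!) * (y ^ k * exp (-(a * y))) := by ring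
  simp_rw [h, integral_const_mul, integral_pow_mul_exp_neg_mul_Ioi ha, div_pow]
  field_simp
  ring

theorem mul_integral_exp_neg_mul_mul_besselI1Series {a : ℝ} (ha : 0 < a) (B : ℝ) :
    B * ∫ y in Ioi 0, exp (-(a * y)) * besselI1Series (B * y) = exp (B / a) - 1 := by
  set F : ℕ → ℝ → ℝ := fun k y ↦ exp (-(a * y)) * ((B * y) ^ k / (k ! * (k + 1)!))
  have hF_int (k : ℕ) : IntegrableOn (F k) (Ioi 0) := by
    refine IntegrableOn.congr_fun ((integrableOn_pow_mul_exp_neg_mul_Ioi ha k).const_mul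
      (B ^ k / (k ! * (k + 1)!))) (fun y _ ↦ ?_) measurableSet_Ioi
    simp only [F]; ring
  have hF_norm (k : ℕ) : ∫ y in Ioi 0, ‖F k y‖ = (|B| / a) ^ k / (k + 1)! / a := by
    rw [← integral_exp_neg_mul_mul_pow_div ha |B| k]
    refine setIntegral_congr_fun measurableSet_Ioi fun y (hy : 0 < y) ↦ ?_
    simp only [F, norm_mul, norm_div, norm_pow, Real.norm_eq_abs, abs_exp, abs_of_pos hy,
      Nat.abs_cast]
  have hsum : Summable fun k ↦ ∫ y in Ioi 0, ‖F k y‖ := by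
    simp_rw [hF_norm]
    refine (Summable.of_nonneg_of_le (fun k ↦ by positivity) (fun k ↦ ?_)
      (Real.summable_pow_div_factorial (|B| / a))).div_const a
    gcongr
    exact k.le_succ
  calc B * ∫ y in Ioi 0, exp (-(a * y)) * besselI1Series (B * y)
      = B * ∑' k, ∫ y in Ioi 0, F k y := by
        rw [integral_tsum_of_summable_integral_norm hF_int hsum]
        simp only [F, besselI1Series, tsum_mul_left]
    _ = ∑' k : ℕ, (B / a) ^ (k + 1) / (k + 1)! := by
        rw [← tsum_mul_left]
        congr 1 with k
        rw [integral_exp_neg_mul_mul_pow_div ha, pow_succ]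
        field_simp
    _ = exp (B / a) - 1 := (hasSum_pow_succ_div_factorial_succ _).tsum_eq

theorem integral_exp_mul_qt {t : ℝ} (hβ : 0 < β) (ht : 0 < t) (x : ℝ) {l : ℝ}
    (hl : l < cct β θ t) :
    ∫ y in Ioi 0, exp (l * y) * qt β θ t x y =
      exp (-(x * cc β θ t)) * (exp (x * cc β θ t * cct β θ t / (cct β θ t - l)) - 1) := by
  set c := cc β θ t with hc
  set c' := cct β θ t with hc'
  have hc'_eq : c' = c + 2 * θ := cct_eq_cc_add hβ ht
  have hpt (y : ℝ) : exp (l * y) * qt β θ t x y = x * c * c' * exp (-(x * c)) *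
      (exp (-((c' - l) * y)) * besselI1Series (x * c * c' * y)) := by
    have hexp : exp (l * y) * exp (-((x + y) * c) - 2 * θ * y) =
        exp (-(x * c)) * exp (-((c' - l) * y)) := by
      rw [← exp_add, ← exp_add, hc'_eq]; ring_nf
    simp only [qt, besselI1Series, ← hc, ← hc']
    rw [show x * c * c' * y = x * y * c * c' by ring]
    linear_combination (x * c * c' * ∑' k : ℕ, (x * y * c * c') ^ k / (k ! * (k + 1)!)) * hexp
  rw [setIntegral_congr_fun measurableSet_Ioi fun y _ ↦ hpt y, integral_const_mul,
    ← mul_integral_exp_neg_mul_mul_besselI1Series (sub_pos.2 hl)]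
  ring

end CSBP

theorem exp_cct_harmonic_general (β θ : ℝ) (hβ : 0 < β) (t r : ℝ) (ht : 0 < t) (hr : 0 < r)
    (u : ℝ) (hu : 0 ≤ u) (x : ℝ) :
    Real.exp (-(x * cc β θ t)) * Real.exp (cct β θ (u + t + r) * 0) +
      (∫ y in Set.Ioi (0 : ℝ), Real.exp (cct β θ (u + t + r) * y) * qt β θ t x y)
      = Real.exp (cct β θ (u + r) * x) := by
  have hs : 0 < u + r := by linarith
  have hkey := cc_mul_cct_add (θ := θ) hβ hs ht
  rw [show u + t + r = u + r + t by ring]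
  have hlt : cct β θ (u + r + t) < cct β θ t := by
    have := hkey ▸ mul_pos (cc_pos (θ := θ) hβ ht) (cct_pos hβ (add_pos hs ht))
    exact sub_pos.1 (pos_of_mul_pos_right this (cct_pos hβ hs).le)
  have hexponent : -(x * cc β θ t) + x * cc β θ t * cct β θ t / (cct β θ t - cct β θ (u + r + t))
      = cct β θ (u + r) * x := by
    field_simp [(sub_pos.2 hlt).ne']
    linear_combination x * hkey
  rw [integral_exp_mul_qt hβ ht x hlt, mul_zero, Real.exp_zero, mul_one, ← hexponent,
    Real.exp_add]
  ring

/-- The space–time function `(t, z) ↦ e^{c̃^θ_{t+r} z}` is harmonic for the CSBP kernels: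
for `t, r > 0`, `u ≥ 0` and `x ≥ 0`,
`e^{-x c^θ_t} e^{c̃^θ_{u+t+r}·0} + ∫_0^∞ e^{c̃^θ_{u+t+r} y} q^θ_t(x,y) dy = e^{c̃^θ_{u+r} x}`
(the extinction atom at `0` contributing `e^{-x c^θ_t}`). -/
theorem exp_cct_harmonic (β θ : ℝ) (hβ : 0 < β) (t r : ℝ) (ht : 0 < t) (hr : 0 < r)
    (u : ℝ) (hu : 0 ≤ u) (x : ℝ) (hx : 0 ≤ x) :
    Real.exp (-(x * cc β θ t)) * Real.exp (cct β θ (u + t + r) * 0) +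
      (∫ y in Set.Ioi (0 : ℝ), Real.exp (cct β θ (u + t + r) * y) * qt β θ t x y)
      = Real.exp (cct β θ (u + r) * x) :=
  exp_cct_harmonic_general β θ hβ t r ht hr u hu x
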